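/- (Toda-type identity.) For every n ≥ 1 and every ω ∈ ℝ, the Hankel determinants satisfy h_n''(ω) h_n(ω) − (h_n'(ω))² = − h_{n−1}(ω) h_{n+1}(ω), where primes denote derivatives with respect to ω. -/

import Mathlib

/-!
Differentiating under the integral sign gives `μ_m' = i μ_{m+1}`, so the derivative of a row of a
Hankel matrix is `i` times the next row. Differentiating `h_n` row by row, every term but the last
has two equal rows; hence `h_n' = i` times the minor of `H_{n+1}` (the `(n+2)`-Hankel matrix) with
row `n` and column `n+1` deleted, and, by symmetry of Hankel matrices, `h_n'' = i²` times the
minor with row and column `n` deleted. The identity is then the Desnanot–Jacobi identity for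
`H_{n+1}`, which follows from Jacobi's theorem on the minors of the adjugate: for a matrix in block
form, the complementary `2 × 2` block of `adjugate A` has determinant `det A · det A₁₁`.
-/

open MeasureTheory

/-- Moments of the oscillatory weight `e^{iωx}` on `[-1,1]`. -/
noncomputable def mu (ω : ℝ) (n : ℕ) : ℂ :=
  ∫ x : ℝ in (-1 : ℝ)..1, (x : ℂ) ^ n * Complex.exp (Complex.I * ω * x)

/-- The `(n+1) × (n+1)` Hankel determinant of the moments. -/
noncomputable def hankel (n : ℕ) (ω : ℝ) : ℂ :=
  Matrix.det (Matrix.of fun j k : Fin (n + 1) => mu ω ((j : ℕ) + (k : ℕ)))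

open Matrix

section Determinants

variable {R : Type*} [CommRing R]

section Blocks

variable {m n : Type*} [Fintype m] [Fintype n] [DecidableEq m] [DecidableEq n]

theorem Matrix.det_mul_det_toBlocks₂₂_adjugate (A : Matrix (m ⊕ n) (m ⊕ n) R) :
    A.det * (adjugate A).toBlocks₂₂.det = A.det ^ Fintype.card n * A.toBlocks₁₁.det := by
  set C := adjugate A
  have hAC : fromBlocks A.toBlocks₁₁ A.toBlocks₁₂ A.toBlocks₂₁ A.toBlocks₂₂ *
      fromBlocks C.toBlocks₁₁ C.toBlocks₁₂ C.toBlocks₂₁ C.toBlocks₂₂ = A.det • 1 := by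
    rw [fromBlocks_toBlocks, fromBlocks_toBlocks]
    exact mul_adjugate A
  rw [fromBlocks_multiply] at hAC
  -- Replacing the first columns of `adjugate A` by those of `1` makes `A * _` block triangular.
  have hAB : A * fromBlocks 1 C.toBlocks₁₂ 0 C.toBlocks₂₂ =
      fromBlocks A.toBlocks₁₁ 0 A.toBlocks₂₁ (A.det • 1) := by
    conv_lhs => rw [← fromBlocks_toBlocks A, fromBlocks_multiply]
    have h₁₂ := congrArg toBlocks₁₂ hAC
    have h₂₂ := congrArg toBlocks₂₂ hAC
    simp only [toBlocks_fromBlocks₁₂, toBlocks_fromBlocks₂₂] at h₁₂ h₂₂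
    rw [h₁₂, h₂₂]
    ext (i | i) (j | j) <;> simp [toBlocks₁₂, toBlocks₂₂, one_apply]
  have := congrArg det hAB
  rw [det_mul, det_fromBlocks_zero₂₁, det_fromBlocks_zero₁₂, det_one, det_smul, det_one] at this
  linear_combination this

theorem Matrix.det_toBlocks₂₂_adjugate [Nonempty n] (A : Matrix (m ⊕ n) (m ⊕ n) R) :
    (adjugate A).toBlocks₂₂.det = A.det ^ (Fintype.card n - 1) * A.toBlocks₁₁.det := by
  let X := mvPolynomialX (m ⊕ n) (m ⊕ n) ℤ
  suffices X.adjugate.toBlocks₂₂.det = X.det ^ (Fintype.card n - 1) * X.toBlocks₁₁.det by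
    let φ := MvPolynomial.aeval (R := ℤ) fun p : (m ⊕ n) × (m ⊕ n) => A p.1 p.2
    have h := congrArg φ this
    rw [map_mul, map_pow, AlgHom.map_det, AlgHom.map_det, AlgHom.map_det] at h
    change (φ.mapMatrix X.adjugate).toBlocks₂₂.det = _ * (φ.mapMatrix X).toBlocks₁₁.det at h
    rwa [AlgHom.map_adjugate, mvPolynomialX_mapMatrix_aeval] at h
  apply mul_left_cancel₀ (det_mvPolynomialX_ne_zero (m ⊕ n) ℤ)
  rw [det_mul_det_toBlocks₂₂_adjugate, ← mul_assoc, ← pow_succ',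
    Nat.sub_add_cancel Fintype.card_pos]

end Blocks

-- `(Fin.last k).castSucc.succAbove` omits the index `k`, and `Fin.castSucc` omits `k + 1`.
theorem Matrix.desnanot_jacobi {k : ℕ} (A : Matrix (Fin (k + 2)) (Fin (k + 2)) R) :
    A.det * (A.submatrix (Fin.castAdd 2) (Fin.castAdd 2)).det =
      (A.submatrix (Fin.last k).castSucc.succAbove (Fin.last k).castSucc.succAbove).det *
          (A.submatrix Fin.castSucc Fin.castSucc).det -
        (A.submatrix (Fin.last k).castSucc.succAbove Fin.castSucc).det *
          (A.submatrix Fin.castSucc (Fin.last k).castSucc.succAbove).det := by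
  have h := det_toBlocks₂₂_adjugate (A.submatrix finSumFinEquiv finSumFinEquiv)
  rw [adjugate_submatrix_equiv_self, det_fin_two, det_submatrix_equiv_self] at h
  simp only [toBlocks₂₂, toBlocks₁₁, submatrix_apply, finSumFinEquiv_apply_left,
    finSumFinEquiv_apply_right, adjugate_fin_succ_eq_det_submatrix, Nat.succ_eq_add_one,
    Fin.val_natAdd, Fin.isValue, of_apply, Fin.coe_ofNat_eq_mod, Nat.zero_mod, add_zero,
    Even.add_self, Even.neg_pow, one_pow, one_mul, Nat.mod_succ, odd_add_one_self,
    Odd.neg_one_pow, neg_mul, odd_add_self_one', mul_neg, neg_neg, Fintype.card_fin,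
    Nat.add_one_sub_one, pow_one] at h
  have h₀ : Fin.natAdd k (0 : Fin 2) = (Fin.last k).castSucc := rfl
  have h₁ : Fin.natAdd k (1 : Fin 2) = Fin.last (k + 1) := rfl
  rw [h₀, h₁, Fin.succAbove_last] at h
  exact h.symm.trans (by ring)

theorem Matrix.sum_det_updateRow_succ {n : ℕ} (M : Matrix (Fin (n + 2)) (Fin (n + 1)) R) :
    ∑ j : Fin (n + 1), ((M.submatrix Fin.castSucc id).updateRow j (M j.succ)).det =
      (M.submatrix (Fin.last n).castSucc.succAbove id).det := by
  rw [Fintype.sum_eq_single (Fin.last n)]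
  · congr 1
    ext i k
    rcases Fin.eq_castSucc_or_eq_last i with ⟨i, rfl⟩ | rfl
    · simp [Fin.succAbove_of_castSucc_lt]
    · simp [Fin.succAbove_of_le_castSucc]
  · intro j hj
    obtain ⟨j, rfl⟩ := Fin.exists_castSucc_eq.mpr hj
    have hne : j.castSucc ≠ j.succ := Fin.castSucc_lt_succ.ne
    apply det_zero_of_row_eq hne
    simp only [updateRow_self, updateRow_ne hne.symm]
    rfl

end Determinants

def hankelMatrix {α : Type*} (a : ℕ → α) (n : ℕ) : Matrix (Fin n) (Fin n) α :=
  of fun j k => a (j + k)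

theorem hankelMatrix_transpose {α : Type*} (a : ℕ → α) (n : ℕ) :
    (hankelMatrix a n)ᵀ = hankelMatrix a n := by
  ext j k
  simp [hankelMatrix, add_comm]

theorem det_hankelMatrix_submatrix_comm {R : Type*} [CommRing R] {a : ℕ → R} {n m : ℕ}
    (r c : Fin m → Fin n) :
    ((hankelMatrix a n).submatrix r c).det = ((hankelMatrix a n).submatrix c r).det := by
  rw [← det_transpose, transpose_submatrix, hankelMatrix_transpose]

section Derivative

variable {𝕜 R : Type*} [NontriviallyNormedField 𝕜] [NormedCommRing R] [NormedAlgebra 𝕜 R]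

theorem hasDerivAt_det {ι : Type*} [Fintype ι] [DecidableEq ι] {M : 𝕜 → Matrix ι ι R}
    {M' : Matrix ι ι R} {x : 𝕜} (h : ∀ i, HasDerivAt (fun y => M y i) (M' i) x) :
    HasDerivAt (fun y => (M y).det) (∑ i, ((M x).updateRow i (M' i)).det) x := by
  let D : ContinuousMultilinearMap 𝕜 (fun _ : ι => ι → R) R :=
    ⟨(detRowAlternating : (ι → R) [⋀^ι]→ₗ[R] R).toMultilinearMap.restrictScalars 𝕜,
      continuous_id.matrix_det⟩
  refine (HasFDerivAt.multilinear_comp (f := D) fun i => (h i).hasFDerivAt).hasDerivAt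
    |>.congr_deriv ?_
  simp only [_root_.sum_apply, ContinuousLinearMap.comp_apply,
    ContinuousLinearMap.toSpanSingleton_apply, one_smul,
    ContinuousMultilinearMap.toContinuousLinearMap_apply, updateRow, D]
  rfl

theorem hasDerivAt_det_hankelMatrix_submatrix_castSucc {a : ℕ → 𝕜 → R} {c : R} {x : 𝕜}
    (ha : ∀ m, HasDerivAt (a m) (c * a (m + 1) x) x) {n : ℕ} (col : Fin (n + 1) → Fin (n + 2)) :
    HasDerivAt (fun y => ((hankelMatrix (a · y) (n + 2)).submatrix Fin.castSucc col).det)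
      (c * ((hankelMatrix (a · x) (n + 2)).submatrix (Fin.last n).castSucc.succAbove col).det)
      x := by
  set M := (hankelMatrix (a · x) (n + 2)).submatrix id col
  have hrow : ∀ j : Fin (n + 1), HasDerivAt
      (fun y => (hankelMatrix (a · y) (n + 2)).submatrix Fin.castSucc col j) (c • M j.succ) x :=
    fun j => hasDerivAt_pi.2 fun k => by
      simpa [M, hankelMatrix, add_right_comm] using ha (j + col k)
  convert hasDerivAt_det hrow using 1
  simp_rw [det_updateRow_smul, ← Finset.mul_sum]
  exact congrArg (c * ·) (sum_det_updateRow_succ M).symm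

end Derivative

theorem hasDerivAt_mu (m : ℕ) (ω : ℝ) :
    HasDerivAt (fun w : ℝ => mu w m) (Complex.I * mu ω (m + 1)) ω := by
  set F' := fun (w x : ℝ) => Complex.I * ((x : ℂ) ^ (m + 1) * Complex.exp (Complex.I * w * x))
  have hF : ∀ x w : ℝ,
      HasDerivAt (fun w : ℝ => (x : ℂ) ^ m * Complex.exp (Complex.I * w * x)) (F' w x) w := by
    intro x w
    have hlin : HasDerivAt (fun w : ℝ => Complex.I * w * x) (Complex.I * x) w := by
      simpa using ((Complex.ofRealCLM.hasDerivAt (x := w)).const_mul Complex.I).mul_const (x : ℂ)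
    exact (hlin.cexp.const_mul _).congr_deriv (by ring)
  have hF'_le : ∀ x ∈ Set.uIoc (-1 : ℝ) 1, ∀ w : ℝ, ‖F' w x‖ ≤ 1 := by
    intro x hx w
    rw [Set.uIoc_of_le (by norm_num)] at hx
    have hexp : ‖Complex.exp (Complex.I * w * x)‖ = 1 := by
      rw [show Complex.I * w * x = ((w * x : ℝ) : ℂ) * Complex.I by push_cast; ring]
      exact Complex.norm_exp_ofReal_mul_I (w * x)
    simp only [F', norm_mul, Complex.norm_I, hexp, norm_pow, Complex.norm_real, Real.norm_eq_abs,
      one_mul, mul_one]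
    exact pow_le_one₀ (abs_nonneg x) (abs_le.2 ⟨hx.1.le, hx.2⟩)
  have h := intervalIntegral.hasDerivAt_integral_of_dominated_loc_of_deriv_le
    (μ := volume) (a := -1) (b := 1) (x₀ := ω) (F' := F') (bound := fun _ => 1) Filter.univ_mem
    (.of_forall fun w => Continuous.aestronglyMeasurable (by fun_prop))
    (Continuous.intervalIntegrable (by fun_prop) _ _)
    (Continuous.aestronglyMeasurable (by fun_prop))
    (.of_forall fun x hx w _ => hF'_le x hx w) intervalIntegrable_const
    (.of_forall fun x _ w _ => hF x w)
  rw [mu, ← intervalIntegral.integral_const_mul]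
  exact h.2

/-- The Toda-type identity `h_n'' h_n - (h_n')² = -h_{n-1} h_{n+1}`. -/
theorem stmt16 (n : ℕ) (hn : 1 ≤ n) (ω : ℝ) :
    deriv (deriv (hankel n)) ω * hankel n ω - (deriv (hankel n) ω) ^ 2 =
      -(hankel (n - 1) ω * hankel (n + 1) ω) := by
  obtain ⟨k, rfl⟩ := Nat.exists_eq_add_of_le' hn
  set H := fun w => hankelMatrix (mu w) (k + 3)
  set p : Fin (k + 3) := (Fin.last (k + 1)).castSucc
  have h₀ : hankel (k + 1) = fun w => ((H w).submatrix Fin.castSucc Fin.castSucc).det := rfl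
  have h₁ : deriv (hankel (k + 1)) =
      fun w => Complex.I * ((H w).submatrix p.succAbove Fin.castSucc).det := by
    ext w
    rw [h₀]
    exact (hasDerivAt_det_hankelMatrix_submatrix_castSucc (hasDerivAt_mu · w) Fin.castSucc).deriv
  have h₂ : deriv (deriv (hankel (k + 1))) ω =
      Complex.I * (Complex.I * ((H ω).submatrix p.succAbove p.succAbove).det) := by
    simp_rw [h₁, H, det_hankelMatrix_submatrix_comm p.succAbove]
    exact ((hasDerivAt_det_hankelMatrix_submatrix_castSucc (hasDerivAt_mu · ω) p.succAbove)
      |>.const_mul _).deriv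
  have hDJ := desnanot_jacobi (H ω)
  rw [det_hankelMatrix_submatrix_comm (a := mu ω) Fin.castSucc p.succAbove] at hDJ
  change _ = -(((H ω).submatrix (Fin.castAdd 2) (Fin.castAdd 2)).det * (H ω).det)
  rw [h₂, h₁, h₀, mul_pow, ← mul_assoc, Complex.I_mul_I, Complex.I_sq]
  linear_combination hDJ
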